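/- arXiv:1502.05888 — 2 statements merged into one kernel-verified Lean document; each statement's English description precedes it below -/
import Mathlib

section
/- For every pseudo-distance d on the set of rational judgment sets, the max-distance rule F^{d,max} is not majority-preserving: there exists a majority-consistent profile P such that F^{d,max}(P) strictly contains ext(m(P)). -/
open scoped NNReal

variable {Φ : Type*} [DecidableEq Φ]

/-- Number of voters in profile `P` accepting `φ`. -/
def Nacc {n : ℕ} (P : Fin n → Finset Φ) (φ : Φ) : ℕ :=
  (Finset.univ.filter fun i => φ ∈ P i).card

/-- The majoritarian judgment set `m(P)`: agenda elements accepted by a strict majority. -/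
def maj (A : Finset Φ) {n : ℕ} (P : Fin n → Finset Φ) : Finset Φ :=
  A.filter fun φ => n < 2 * Nacc P φ

/-- A rational judgment set: a complete and consistent subset of the agenda. -/
def Rational (A : Finset Φ) (neg : Φ → Φ) (Cons : Finset Φ → Prop) (J : Finset Φ) : Prop :=
  J ⊆ A ∧ (∀ φ ∈ A, φ ∈ J ∨ neg φ ∈ J) ∧ Cons J

/-- The set of rational extensions of `S`. -/
def extSet (A : Finset Φ) (neg : Φ → Φ) (Cons : Finset Φ → Prop) (S : Finset Φ) :
    Set (Finset Φ) :=
  {J | Rational A neg Cons J ∧ S ⊆ J}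

/-- The max-distance rule `F^{d,max}`: rational judgment sets minimizing the maximal
distance to the individual judgment sets of the profile. -/
def Fmax (A : Finset Φ) (neg : Φ → Φ) (Cons : Finset Φ → Prop)
    (d : Finset Φ → Finset Φ → ℝ≥0) {n : ℕ} (P : Fin n → Finset Φ) : Set (Finset Φ) :=
  {J | Rational A neg Cons J ∧ ∀ J', Rational A neg Cons J' →
      (Finset.univ.sup fun i => d J (P i)) ≤ Finset.univ.sup fun i => d J' (P i)}

/-!
Let `K₁ ≠ K₂` be a pair of rational judgment sets at minimal distance. In the profile
`⟨K₁, K₁, K₂⟩` the majority is `K₁`, which is already rational, so `ext(m(P)) = {K₁}`.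
Every rational `J` is at distance at least `d(K₁, K₂)` from some voter (from the third one if
`J = K₁`, from the first one otherwise, by minimality), while `K₁` and `K₂` are at distance at
most `d(K₁, K₂)` from every voter. So `K₂ ∈ F^{d,max}(P)` as well.
-/

theorem Set.Finite.exists_closest_pair {α β : Type*} [LinearOrder β] {s : Set α}
    (hs : s.Finite) (hnt : s.Nontrivial) (f : α → α → β) :
    ∃ x ∈ s, ∃ y ∈ s, x ≠ y ∧ ∀ x' ∈ s, ∀ y' ∈ s, x' ≠ y' → f x y ≤ f x' y' := by
  obtain ⟨⟨x, y⟩, ⟨hx, hy, hxy⟩, hmin⟩ :=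
    Set.exists_min_image _ (Function.uncurry f) hs.offDiag (Set.offDiag_nonempty.2 hnt)
  exact ⟨x, hx, y, hy, hxy, fun x' hx' y' hy' hxy' => hmin (x', y') ⟨hx', hy', hxy'⟩⟩

theorem sup_univ_comp_vec_aab {α β : Type*} [SemilatticeSup β] [OrderBot β]
    (f : α → β) (a b : α) : (Finset.univ.sup fun i => f (![a, a, b] i)) = f a ⊔ f b := by
  simp [Fin.univ_succ]

section Rational

variable {α : Type*} {A : Finset α} {neg : α → α} {Cons : Finset α → Prop}

theorem finite_setOf_rational : {J | Rational A neg Cons J}.Finite :=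
  A.powerset.finite_toSet.subset fun _ hJ => Finset.mem_powerset.2 hJ.1

theorem Rational.eq_of_subset (hnotboth : ∀ S : Finset α, Cons S → ∀ φ ∈ A, φ ∈ S → neg φ ∉ S)
    {J K : Finset α} (hJ : Rational A neg Cons J) (hK : Rational A neg Cons K) (hKJ : K ⊆ J) :
    J = K := by
  refine (Finset.Subset.antisymm hKJ fun φ hφ => ?_).symm
  have hφA : φ ∈ A := hJ.1 hφ
  exact (hK.2.1 φ hφA).resolve_right fun hnφ => hnotboth J hJ.2.2 φ hφA hφ (hKJ hnφ)

theorem extSet_eq_singleton (hnotboth : ∀ S : Finset α, Cons S → ∀ φ ∈ A, φ ∈ S → neg φ ∉ S)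
    {K : Finset α} (hK : Rational A neg Cons K) : extSet A neg Cons K = {K} :=
  Set.eq_singleton_iff_unique_mem.2
    ⟨⟨hK, subset_rfl⟩, fun _ hJ => hJ.1.eq_of_subset hnotboth hK hJ.2⟩

end Rational

theorem maj_vec_aab {A J : Finset Φ} (K : Finset Φ) (hJ : J ⊆ A) : maj A ![J, J, K] = J := by
  ext φ
  simp only [maj, Nacc, Finset.mem_filter, Finset.card_filter, Fin.sum_univ_three]
  by_cases hφJ : φ ∈ J
  · by_cases hφK : φ ∈ K <;> simp [hφJ, hφK, hJ hφJ]
  · by_cases hφK : φ ∈ K <;> simp [hφJ, hφK]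

section ClosestPair

variable {A : Finset Φ} {neg : Φ → Φ} {Cons : Finset Φ → Prop} {d : Finset Φ → Finset Φ → ℝ≥0}
  {K₁ K₂ : Finset Φ}

theorem closest_le_sup_dist (hK₁ : Rational A neg Cons K₁)
    (hmin : ∀ X Y, Rational A neg Cons X → Rational A neg Cons Y → X ≠ Y → d K₁ K₂ ≤ d X Y)
    {J : Finset Φ} (hJ : Rational A neg Cons J) : d K₁ K₂ ≤ d J K₁ ⊔ d J K₂ := by
  by_cases hJK₁ : J = K₁
  · exact hJK₁ ▸ le_sup_right
  · exact le_sup_of_le_left (hmin J K₁ hJ hK₁ hJK₁)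

theorem closest_mem_Fmax_vec_aab (hK₁ : Rational A neg Cons K₁) (hK₂ : Rational A neg Cons K₂)
    (hd₁₁ : d K₁ K₁ = 0) (hd₂₂ : d K₂ K₂ = 0) (hd₂₁ : d K₂ K₁ = d K₁ K₂)
    (hmin : ∀ X Y, Rational A neg Cons X → Rational A neg Cons Y → X ≠ Y → d K₁ K₂ ≤ d X Y) :
    K₁ ∈ Fmax A neg Cons d ![K₁, K₁, K₂] ∧ K₂ ∈ Fmax A neg Cons d ![K₁, K₁, K₂] := by
  have hmax₁ : d K₁ K₁ ⊔ d K₁ K₂ = d K₁ K₂ := by simp [hd₁₁]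
  have hmax₂ : d K₂ K₁ ⊔ d K₂ K₂ = d K₁ K₂ := by simp [hd₂₂, hd₂₁]
  simp only [Fmax, Set.mem_ofPred_eq, sup_univ_comp_vec_aab, hmax₁, hmax₂]
  exact ⟨⟨hK₁, fun _ => closest_le_sup_dist hK₁ hmin⟩, ⟨hK₂, fun _ => closest_le_sup_dist hK₁ hmin⟩⟩

end ClosestPair

theorem fmax_not_majority_preserving_general
    (A : Finset Φ) (neg : Φ → Φ) (Cons : Finset Φ → Prop)
    (hnotboth : ∀ S : Finset Φ, Cons S → ∀ φ ∈ A, φ ∈ S → neg φ ∉ S)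
    (d : Finset Φ → Finset Φ → ℝ≥0)
    (hsymm : ∀ J J', Rational A neg Cons J → Rational A neg Cons J' → d J J' = d J' J)
    (hzero : ∀ J J', Rational A neg Cons J → Rational A neg Cons J' → (d J J' = 0 ↔ J = J'))
    (htwo : ∃ J₁ J₂, Rational A neg Cons J₁ ∧ Rational A neg Cons J₂ ∧ J₁ ≠ J₂) :
    ∃ (n : ℕ) (P : Fin n → Finset Φ), (∀ i, Rational A neg Cons (P i)) ∧
      Cons (maj A P) ∧ extSet A neg Cons (maj A P) ⊂ Fmax A neg Cons d P := by
  obtain ⟨J₁, J₂, hJ₁, hJ₂, hJ₁₂⟩ := htwo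
  obtain ⟨K₁, hK₁, K₂, hK₂, hK₁₂, hmin⟩ :=
    finite_setOf_rational.exists_closest_pair ⟨J₁, hJ₁, J₂, hJ₂, hJ₁₂⟩ d
  obtain ⟨hF₁, hF₂⟩ := closest_mem_Fmax_vec_aab hK₁ hK₂ ((hzero _ _ hK₁ hK₁).2 rfl)
    ((hzero _ _ hK₂ hK₂).2 rfl) (hsymm _ _ hK₂ hK₁) fun X Y hX hY => hmin X hX Y hY
  have hmaj : maj A ![K₁, K₁, K₂] = K₁ := maj_vec_aab K₂ hK₁.1
  refine ⟨3, ![K₁, K₁, K₂], fun i => ?_, ?_, ?_⟩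
  · fin_cases i <;> assumption
  · rw [hmaj]; exact hK₁.2.2
  · rw [hmaj, extSet_eq_singleton hnotboth hK₁]
    exact (Set.singleton_subset_iff.2 hF₁).ssubset_of_mem_notMem hF₂ hK₁₂.symm

/-- for every pseudo-distance `d` on rational judgment sets, `F^{d,max}` is
not majority-preserving: there is a majority-consistent profile `P` such that
`F^{d,max}(P)` strictly contains `ext(m(P))`. -/
theorem fmax_not_majority_preserving
    (A : Finset Φ) (neg : Φ → Φ) (Cons : Finset Φ → Prop)
    (hA_neg : ∀ φ ∈ A, neg φ ∈ A)
    (hneg_ne : ∀ φ ∈ A, neg φ ≠ φ)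
    (hneg_neg : ∀ φ ∈ A, neg (neg φ) = φ)
    (hnotboth : ∀ S : Finset Φ, Cons S → ∀ φ ∈ A, φ ∈ S → neg φ ∉ S)
    (hmono : ∀ S T : Finset Φ, S ⊆ T → Cons T → Cons S)
    (d : Finset Φ → Finset Φ → ℝ≥0)
    (hsymm : ∀ J J', Rational A neg Cons J → Rational A neg Cons J' → d J J' = d J' J)
    (hzero : ∀ J J', Rational A neg Cons J → Rational A neg Cons J' → (d J J' = 0 ↔ J = J'))
    (htwo : ∃ J₁ J₂, Rational A neg Cons J₁ ∧ Rational A neg Cons J₂ ∧ J₁ ≠ J₂) :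
    ∃ (n : ℕ) (P : Fin n → Finset Φ), (∀ i, Rational A neg Cons (P i)) ∧
      Cons (maj A P) ∧ extSet A neg Cons (maj A P) ⊂ Fmax A neg Cons d P :=
  fmax_not_majority_preserving_general A neg Cons hnotboth d hsymm hzero htwo
end

section
/- The ranked agenda rule RA satisfies strong unanimity: if every voter in P accepts φ, then every judgment set in RA(P) contains φ. -/
open scoped NNReal

variable {Φ : Type*} [DecidableEq Φ]

open Classical in
/-- Greedy procedure: add each element of the list in turn if it keeps the set consistent. -/
noncomputable def greedy (Cons : Finset Φ → Prop) : List Φ → Finset Φ → Finset Φ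
  | [], S => S
  | φ :: l, S =>
      if Cons (insert φ S) then greedy Cons l (insert φ S) else greedy Cons l S

/-- The ranked-agenda rule: outcomes of the greedy procedure along some enumeration of the
agenda in non-increasing order of `N(P,·)`. -/
def RA (A : Finset Φ) (Cons : Finset Φ → Prop) {n : ℕ}
    (P : Fin n → Finset Φ) : Set (Finset Φ) :=
  {J | ∃ l : List Φ, l.Nodup ∧ (∀ φ, φ ∈ l ↔ φ ∈ A) ∧
      l.Pairwise (fun a b => Nacc P b ≤ Nacc P a) ∧ J = greedy Cons l ∅}


/-!
Unanimously accepted formulas have the maximal support `n`, so in a ranking by support every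
formula before `φ` is unanimous as well. All of these lie in the consistent judgment set of any
single voter, so the greedy procedure accepts each of them, `φ` included.
-/

theorem Nacc_le {n : ℕ} (P : Fin n → Finset Φ) (ψ : Φ) : Nacc P ψ ≤ n := by
  simpa [Nacc] using Finset.card_filter_le Finset.univ fun i => ψ ∈ P i

theorem Nacc_eq_iff_forall_mem {n : ℕ} (P : Fin n → Finset Φ) (ψ : Φ) :
    Nacc P ψ = n ↔ ∀ i, ψ ∈ P i := by
  simpa [Nacc] using Finset.card_filter_eq_iff (s := Finset.univ) (p := fun i => ψ ∈ P i)

section Greedy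

variable (Cons : Finset Φ → Prop)

theorem subset_greedy : ∀ (l : List Φ) (S : Finset Φ), S ⊆ greedy Cons l S
  | [], _ => le_rfl
  | ψ :: l, S => by
    rw [greedy]
    split
    · exact (Finset.subset_insert ψ S).trans (subset_greedy l _)
    · exact subset_greedy l S

theorem greedy_append (l₁ l₂ : List Φ) (S : Finset Φ) :
    greedy Cons (l₁ ++ l₂) S = greedy Cons l₂ (greedy Cons l₁ S) := by
  induction l₁ generalizing S with
  | nil => rfl
  | cons ψ l₁ ih =>
    simp only [List.cons_append, greedy]
    split <;> exact ih _

theorem toFinset_subset_greedy (hmono : ∀ S T : Finset Φ, S ⊆ T → Cons T → Cons S)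
    {T : Finset Φ} (hT : Cons T) :
    ∀ (l : List Φ) (S : Finset Φ), (∀ ψ ∈ l, ψ ∈ T) → S ⊆ T → l.toFinset ⊆ greedy Cons l S
  | [], _, _, _ => by simp
  | ψ :: l, S, hl, hS => by
    have hins : insert ψ S ⊆ T := Finset.insert_subset (hl ψ List.mem_cons_self) hS
    have hrest := toFinset_subset_greedy hmono hT l (insert ψ S)
      (fun χ hχ => hl χ (List.mem_cons_of_mem ψ hχ)) hins
    rw [greedy, if_pos (hmono _ _ hins hT), List.toFinset_cons]
    exact Finset.insert_subset (subset_greedy Cons l _ (Finset.mem_insert_self ψ S)) hrest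

end Greedy

/-- the ranked-agenda rule satisfies strong unanimity: if every voter in `P`
accepts `φ`, then every judgment set in `RA(P)` contains `φ`. -/
theorem ra_strong_unanimity
    (A : Finset Φ) (neg : Φ → Φ) (Cons : Finset Φ → Prop)
    (hmono : ∀ S T : Finset Φ, S ⊆ T → Cons T → Cons S)
    {n : ℕ} (hn : 0 < n) (P : Fin n → Finset Φ) (hP : ∀ i, Rational A neg Cons (P i))
    (φ : Φ) (hφ : φ ∈ A) (huna : ∀ i, φ ∈ P i) :
    ∀ J ∈ RA A Cons P, φ ∈ J := by
  rintro J ⟨l, -, hlA, hsort, rfl⟩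
  obtain ⟨l₁, l₂, rfl⟩ := List.append_of_mem ((hlA φ).mpr hφ)
  have hNφ : Nacc P φ = n := (Nacc_eq_iff_forall_mem P φ).mpr huna
  have hprefix : ∀ ψ ∈ l₁ ++ [φ], ∀ i, ψ ∈ P i := by
    intro ψ hψ
    rcases List.mem_append.mp hψ with hψ | hψ
    · have hle : Nacc P φ ≤ Nacc P ψ :=
        (List.pairwise_append.mp hsort).2.2 ψ hψ φ List.mem_cons_self
      exact (Nacc_eq_iff_forall_mem P ψ).mp (le_antisymm (Nacc_le P ψ) (hNφ.symm.trans_le hle))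
    · exact (List.mem_singleton.mp hψ) ▸ huna
  let i₀ : Fin n := ⟨0, hn⟩
  have hφG : φ ∈ greedy Cons (l₁ ++ [φ]) ∅ :=
    toFinset_subset_greedy Cons hmono (hP i₀).2.2 (l₁ ++ [φ]) ∅
      (fun ψ hψ => hprefix ψ hψ i₀) (Finset.empty_subset _) (by simp)
  rw [show l₁ ++ φ :: l₂ = (l₁ ++ [φ]) ++ l₂ by simp, greedy_append]
  exact subset_greedy Cons l₂ _ hφG
end
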